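/- Let ω > 0 and let E_ω ⊆ AddCircle(2π) be the set of points represented by real numbers ξ with 1 − cos ξ ≤ ω (this set is well defined since 1 − cos is 2π-periodic, and 1 − cos ξ = 2 sin²(ξ/2)). Then for every finite set S ⊆ ℤ and every function φ : ℤ → ℂ there exists g ∈ L²(AddCircle(2π)) (with respect to Haar measure) such that g vanishes almost everywhere outside E_ω and the Fourier coefficients of g satisfy fourierCoeff(g)(k) = φ(k) for every k ∈ S. In other words, the restriction to any finite vertex set S of the Paley–Wiener space PW_ω(ℤ) is all of ℂ^S. -/

import Mathlib

/-!
Pick a nonempty open set `A ⊆ E_ω`. The truncated characters `1_A e_k`, `k ∈ S`, are linearly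
independent in `L²`: a trigonometric polynomial vanishing on `A` vanishes identically, since it is
real-analytic in the angle. For linearly independent vectors `w_k` of an inner product space the
map `x ↦ (⟪w_k, x⟫)_k` is injective on their span, hence onto `ℂ^S` by counting dimensions. A vector
`x` in the span of the `1_A e_k` vanishes off `A`, so `⟪1_A e_k, x⟫ = ⟪e_k, x⟫` is the `k`-th
Fourier coefficient of `x`.
-/

open scoped Real
open MeasureTheory AddCircle

instance : Fact (0 < 2 * π) := ⟨by positivity⟩

/-- The subset of the circle `ℝ/2πℤ` consisting of the points represented by reals `ξ` with
`1 − cos ξ ≤ ω` (well defined since `1 − cos` is `2π`-periodic). -/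
def lowFreqSet (ω : ℝ) : Set (AddCircle (2 * π)) :=
  {y : AddCircle (2 * π) | ∃ ξ : ℝ, (ξ : AddCircle (2 * π)) = y ∧ 1 - Real.cos ξ ≤ ω}

open Set Submodule
open scoped InnerProductSpace

theorem exists_mem_span_forall_inner_eq {𝕜 E ι : Type*} [RCLike 𝕜] [NormedAddCommGroup E]
    [InnerProductSpace 𝕜 E] [Fintype ι] {w : ι → E} (hw : LinearIndependent 𝕜 w) (φ : ι → 𝕜) :
    ∃ x ∈ span 𝕜 (range w), ∀ i, ⟪w i, x⟫_𝕜 = φ i := by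
  set W := span 𝕜 (range w)
  let L : W →ₗ[𝕜] ι → 𝕜 := LinearMap.pi fun i => (innerₛₗ 𝕜 (w i)).comp W.subtype
  have hL : Function.Injective L := by
    refine (injective_iff_map_eq_zero L).2 fun x hx => ?_
    have hW : W ≤ (𝕜 ∙ (x : E))ᗮ := span_le.2 <| range_subset_iff.2 fun i =>
      mem_orthogonal_singleton_iff_inner_left.2 (congrFun hx i)
    exact Subtype.ext <| inner_self_eq_zero.1 <| mem_orthogonal_singleton_iff_inner_left.1 (hW x.2)
  have hdim : Module.finrank 𝕜 W = Module.finrank 𝕜 (ι → 𝕜) := by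
    rw [finrank_span_eq_card hw, Module.finrank_fintype_fun_eq_card]
  have : FiniteDimensional 𝕜 W := FiniteDimensional.span_of_finite 𝕜 (finite_range w)
  obtain ⟨x, hx⟩ := (LinearMap.injective_iff_surjective_of_finrank_eq_finrank hdim).1 hL φ
  exact ⟨x, x.2, fun i => congrFun hx i⟩

section IndicatorToLp

variable {X : Type*} [TopologicalSpace X] [CompactSpace X] [MeasurableSpace X] [BorelSpace X]
  {μ : Measure X} [IsFiniteMeasure μ] {A : Set X}

variable (μ) in
noncomputable def indicatorToLp (hA : MeasurableSet A) : C(X, ℂ) →ₗ[ℂ] Lp ℂ 2 μ where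
  toFun f := ((f.memLp μ ℂ).indicator hA).toLp (A.indicator f)
  map_add' f g :=
    (MemLp.toLp_congr _ _ (.of_eq (by rw [ContinuousMap.coe_add, indicator_add']))).trans
      (MemLp.toLp_add _ _)
  map_smul' c f :=
    (MemLp.toLp_congr _ (((f.memLp μ ℂ).indicator hA).const_smul c)
      (.of_eq (indicator_const_smul A c f))).trans (MemLp.toLp_const_smul _ _)

theorem coeFn_indicatorToLp (hA : MeasurableSet A) (f : C(X, ℂ)) :
    indicatorToLp μ hA f =ᵐ[μ] A.indicator f := by
  change ((f.memLp μ ℂ).indicator hA).toLp (A.indicator f) =ᵐ[μ] _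
  exact MemLp.coeFn_toLp _

theorem inner_indicatorToLp_left (hA : MeasurableSet A) (f g : C(X, ℂ)) :
    ⟪indicatorToLp μ hA g, indicatorToLp μ hA f⟫_ℂ
      = ⟪ContinuousMap.toLp 2 μ ℂ g, indicatorToLp μ hA f⟫_ℂ := by
  simp only [L2.inner_def]
  refine integral_congr_ae ?_
  filter_upwards [coeFn_indicatorToLp hA g, coeFn_indicatorToLp hA f,
    ContinuousMap.coeFn_toLp (p := 2) (𝕜 := ℂ) μ g] with x hg hf hg'
  rw [hg, hf, hg']
  by_cases hx : x ∈ A <;> simp [hx]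

theorem eqOn_zero_of_indicatorToLp_eq_zero [μ.IsOpenPosMeasure] (hA : IsOpen A) {f : C(X, ℂ)}
    (hf : indicatorToLp μ hA.measurableSet f = 0) : EqOn f 0 A := by
  refine Measure.eqOn_open_of_ae_eq (μ := μ) ?_ hA f.continuous.continuousOn continuousOn_const
  have hzero := coeFn_indicatorToLp (μ := μ) hA.measurableSet f
  rw [hf] at hzero
  filter_upwards [ae_restrict_of_ae (hzero.symm.trans (Lp.coeFn_zero ..)),
    ae_restrict_mem hA.measurableSet] with x hx hxA
  rwa [indicator_of_mem hxA] at hx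

end IndicatorToLp

section Fourier

variable {T : ℝ}

theorem analyticOnNhd_comp_coe_of_mem_span_fourier {P : C(AddCircle T, ℂ)}
    (hP : P ∈ span ℂ (range fourier)) : AnalyticOnNhd ℝ (fun ξ : ℝ => P ξ) univ := by
  induction hP using Submodule.span_induction with
  | mem _ h =>
    obtain ⟨n, rfl⟩ := h
    intro x _
    simp only [fourier_coe_apply]
    exact analyticAt_cexp.restrictScalars.comp
      ((analyticAt_const.mul (Complex.ofRealCLM.analyticAt x)).div_const)
  | zero => exact analyticOnNhd_const
  | add _ _ _ _ hP hQ => exact hP.add hQ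
  | smul _ _ _ hP => exact analyticOnNhd_const.mul hP

theorem eq_zero_of_mem_span_fourier_of_eqOn_zero {P : C(AddCircle T, ℂ)}
    (hP : P ∈ span ℂ (range fourier)) {U : Set (AddCircle T)} (hU : IsOpen U) (hne : U.Nonempty)
    (hPU : EqOn P 0 U) : P = 0 := by
  obtain ⟨x₀, hx₀⟩ := hne
  obtain ⟨ξ₀, rfl⟩ := QuotientAddGroup.mk_surjective x₀
  have hzero : EqOn (fun ξ : ℝ => P ξ) 0 univ :=
    (analyticOnNhd_comp_coe_of_mem_span_fourier hP).eqOn_zero_of_preconnected_of_eventuallyEq_zero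
      isPreconnected_univ (mem_univ ξ₀) <| by
        filter_upwards [(hU.preimage continuous_quotient_mk').mem_nhds hx₀] with ξ hξ
        exact hPU hξ
  ext x
  obtain ⟨ξ, rfl⟩ := QuotientAddGroup.mk_surjective x
  exact hzero (mem_univ ξ)

variable [Fact (0 < T)]

theorem linearIndependent_fourier : LinearIndependent ℂ (@fourier T) :=
  orthonormal_fourier.linearIndependent.of_comp
    (ContinuousMap.toLp 2 haarAddCircle ℂ : C(AddCircle T, ℂ) →L[ℂ] _).toLinearMap

theorem linearIndependent_indicatorToLp_fourier {A : Set (AddCircle T)} (hA : IsOpen A)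
    (hne : A.Nonempty) :
    LinearIndependent ℂ (indicatorToLp haarAddCircle hA.measurableSet ∘ @fourier T) :=
  linearIndependent_fourier.map <| disjoint_def.2 fun _ hP hker =>
    eq_zero_of_mem_span_fourier_of_eqOn_zero hP hA hne (eqOn_zero_of_indicatorToLp_eq_zero hA hker)

theorem fourierCoeff_eq_inner_fourierLp (f : Lp ℂ 2 (@haarAddCircle T _)) (n : ℤ) :
    fourierCoeff f n = ⟪fourierLp 2 n, f⟫_ℂ := by
  rw [← fourierBasis_repr, fourierBasis.repr_apply_apply, coe_fourierBasis]

end Fourier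

theorem exists_isOpen_nonempty_subset_lowFreqSet {ω : ℝ} (hω : 0 < ω) :
    ∃ A, IsOpen A ∧ A.Nonempty ∧ A ⊆ lowFreqSet ω :=
  ⟨(↑) '' {ξ : ℝ | 1 - Real.cos ξ < ω},
    QuotientAddGroup.isOpenMap_coe _ (isOpen_lt (by fun_prop) continuous_const),
    ⟨_, 0, by simpa using hω, rfl⟩, by rintro _ ⟨ξ, hξ, rfl⟩; exact ⟨ξ, rfl, hξ.le⟩⟩

theorem PW_restriction_surjective (ω : ℝ) (hω : 0 < ω) (S : Finset ℤ) (φ : ℤ → ℂ) :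
    ∃ g : Lp ℂ 2 (@haarAddCircle (2 * π) _),
      (∀ᵐ x ∂(@haarAddCircle (2 * π) _), x ∉ lowFreqSet ω → (g : AddCircle (2 * π) → ℂ) x = 0) ∧
      ∀ k ∈ S, fourierCoeff (g : AddCircle (2 * π) → ℂ) k = φ k := by
  obtain ⟨A, hA, hAne, hAω⟩ := exists_isOpen_nonempty_subset_lowFreqSet hω
  set Φ := indicatorToLp haarAddCircle hA.measurableSet
  obtain ⟨g, hg, hgφ⟩ := exists_mem_span_forall_inner_eq
    ((linearIndependent_indicatorToLp_fourier hA hAne).comp ((↑) : S → ℤ) Subtype.val_injective)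
    (fun k => φ k)
  obtain ⟨f, rfl⟩ : g ∈ LinearMap.range Φ :=
    span_le.2 (by rintro _ ⟨n, rfl⟩; exact ⟨fourier n, rfl⟩) hg
  refine ⟨Φ f, ?_, fun k hk => ?_⟩
  · filter_upwards [coeFn_indicatorToLp hA.measurableSet f] with x hx hxω
    rw [hx, indicator_of_notMem fun hxA => hxω (hAω hxA)]
  · rw [fourierCoeff_eq_inner_fourierLp, ← inner_indicatorToLp_left]
    exact hgφ ⟨k, hk⟩
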